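/- Let E be a normalized positive operator measure (POM) on a measurable space (Ω,𝒜) with values in the bounded operators on a complex separable Hilbert space H. If E has the norm-1-property, then for every X ∈ 𝒜 with E(X) ≠ 0 and E(X) ≠ I, both 0 and 1 belong to the spectrum of E(X). -/

import Mathlib

open MeasureTheory ContinuousLinearMap
open scoped InnerProductSpace


/-- A positive operator of norm 1 has 1 in its spectrum. -/
lemma one_mem_spectrum_of_isPositive {H : Type*} [NormedAddCommGroup H]
    [InnerProductSpace ℂ H] [CompleteSpace H]
    {A : H →L[ℂ] H} (hA : A.IsPositive) (hn : ‖A‖ = 1) :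
    (1 : ℂ) ∈ spectrum ℂ A := by
  have hsa : IsSelfAdjoint A := hA.isSelfAdjoint
  have : Nontrivial (H →L[ℂ] H) := ⟨⟨A, 0, by intro h; simp [h] at hn⟩⟩
  obtain ⟨z, hz, hz'⟩ := spectrum.exists_nnnorm_eq_spectralRadius (a := A)
  rw [hsa.spectralRadius_eq_nnnorm] at hz'
  have hzn : ‖z‖ = 1 := by
    have := ENNReal.coe_injective hz'
    have h2 : ‖z‖₊ = ‖A‖₊ := by exact_mod_cast this
    calc ‖z‖ = ‖A‖ := congrArg NNReal.toReal h2
      _ = 1 := hn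
  have hre : z = z.re := hsa.mem_spectrum_eq_re hz
  have hmem : (algebraMap ℝ ℂ z.re) ∈ spectrum ℂ A := by
    rw [Complex.coe_algebraMap, ← hre]; exact hz
  have hre' : z.re ∈ spectrum ℝ A := by
    rwa [← spectrum.algebraMap_mem_iff ℂ]
  have hpos' : (0 : H →L[ℂ] H) ≤ A := (ContinuousLinearMap.nonneg_iff_isPositive A).mpr hA
  have hge : 0 ≤ z.re := spectrum_nonneg_of_nonneg hpos' hre'
  have : |z.re| = 1 := by
    rw [hre] at hzn; simpa [Complex.norm_real] using hzn
  have : z.re = 1 := by rw [abs_of_nonneg hge] at this; exact this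
  have hz1 : z = 1 := by rw [hre, this]; norm_num
  rwa [hz1] at hz

/-- If a POM has the norm-1-property, then for every `X` with
`E X ≠ 0` and `E X ≠ 1`, both `0` and `1` belong to the spectrum of `E X`. -/
theorem pom_norm_one_spectrum_contains_zero_and_one
    {Ω : Type*} [MeasurableSpace Ω]
    {H : Type*} [NormedAddCommGroup H] [InnerProductSpace ℂ H] [CompleteSpace H]
    [TopologicalSpace.SeparableSpace H]
    (E : Set Ω → (H →L[ℂ] H))
    (hpos : ∀ X : Set Ω, MeasurableSet X → 0 ≤ E X)
    (hbdd : ∀ X : Set Ω, MeasurableSet X → E X ≤ 1)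
    (huniv : E Set.univ = 1)
    (hadd : ∀ (φ : H) (X : ℕ → Set Ω), (∀ i, MeasurableSet (X i)) →
      Pairwise (Function.onFun Disjoint X) →
      HasSum (fun i => ⟪φ, E (X i) φ⟫_ℂ) ⟪φ, E (⋃ i, X i) φ⟫_ℂ)
    (hnorm1 : ∀ X : Set Ω, MeasurableSet X → E X ≠ 0 → ‖E X‖ = 1) :
    ∀ X : Set Ω, MeasurableSet X → E X ≠ 0 → E X ≠ 1 →
      (0 : ℂ) ∈ spectrum ℂ (E X) ∧ (1 : ℂ) ∈ spectrum ℂ (E X) := by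
  -- E ∅ = 0
  have hempty : E ∅ = 0 := by
    have key : ∀ φ : H, ⟪φ, E ∅ φ⟫_ℂ = 0 := by
      intro φ
      have h := hadd φ (fun _ => ∅) (fun _ => MeasurableSet.empty)
        (fun i j hij => by simp [Function.onFun])
      simp only [Set.iUnion_empty] at h
      have h1 : Filter.Tendsto (fun _ : ℕ => ⟪φ, E ∅ φ⟫_ℂ) Filter.atTop (nhds 0) :=
        h.summable.tendsto_atTop_zero
      exact tendsto_nhds_unique tendsto_const_nhds h1
    have : ∀ x : H, ⟪(E ∅ : H →ₗ[ℂ] H) x, x⟫_ℂ = 0 := by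
      intro x
      rw [← inner_conj_symm]
      simp [key x]
    have h0 := (inner_map_self_eq_zero (E ∅ : H →ₗ[ℂ] H)).mp this
    exact ContinuousLinearMap.coe_injective (by simpa using h0)
  intro X hX hne hne1
  -- complement relation
  have hXc : MeasurableSet Xᶜ := hX.compl
  have hsum : ∀ φ : H, ⟪φ, E X φ⟫_ℂ + ⟪φ, E Xᶜ φ⟫_ℂ = ⟪φ, φ⟫_ℂ := by
    intro φ
    set f : ℕ → Set Ω := fun n => if n = 0 then X else if n = 1 then Xᶜ else ∅ with hf
    have hmeas : ∀ i, MeasurableSet (f i) := by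
      intro i; simp only [hf]; split_ifs <;> first | exact hX | exact hXc | exact .empty
    have hdisj : Pairwise (Function.onFun Disjoint f) := by
      intro i j hij
      simp only [Function.onFun, hf]
      split_ifs <;> first | omega | simp [disjoint_compl_right, disjoint_compl_left]
    have hU : (⋃ i, f i) = Set.univ := by
      ext x
      simp only [Set.mem_iUnion, Set.mem_univ, iff_true]
      by_cases hx : x ∈ X
      · exact ⟨0, by simp [hf, hx]⟩
      · exact ⟨1, by simp [hf, hx]⟩
    have h := hadd φ f hmeas hdisj
    rw [hU, huniv] at h
    have h2 : HasSum (fun i => ⟪φ, E (f i) φ⟫_ℂ) (∑ i ∈ ({0, 1} : Finset ℕ), ⟪φ, E (f i) φ⟫_ℂ) := by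
      apply hasSum_sum_of_ne_finset_zero
      intro b hb
      simp only [Finset.mem_insert, Finset.mem_singleton, not_or] at hb
      have : f b = ∅ := by simp [hf, hb.1, hb.2]
      simp [this, hempty]
    have h3 := h.unique h2
    have e0 : f 0 = X := by simp [hf]
    have e1 : f 1 = Xᶜ := by simp [hf]
    rw [Finset.sum_insert (by decide : (0:ℕ) ∉ ({1} : Finset ℕ)),
      Finset.sum_singleton, e0, e1] at h3
    change ⟪φ, φ⟫_ℂ = _ at h3
    exact h3.symm
  have hcompl : E Xᶜ = 1 - E X := by
    have : ∀ x : H, ⟪((E Xᶜ - (1 - E X)) : H →ₗ[ℂ] H) x, x⟫_ℂ = 0 := by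
      intro x
      have h0 := hsum x
      have h1 := congrArg (starRingEnd ℂ) h0
      simp only [map_add, inner_conj_symm] at h1
      simp only [LinearMap.sub_apply, Module.End.one_apply, ContinuousLinearMap.coe_coe,
        ContinuousLinearMap.sub_apply, ContinuousLinearMap.one_apply, inner_sub_left]
      linear_combination h1
    have h0 := (inner_map_self_eq_zero ((E Xᶜ - (1 - E X)) : H →ₗ[ℂ] H)).mp this
    have : E Xᶜ - (1 - E X) = 0 := ContinuousLinearMap.coe_injective (by simpa using h0)
    exact sub_eq_zero.mp this
  have hc0 : E Xᶜ ≠ 0 := by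
    intro h
    apply hne1
    rw [h] at hcompl
    have := hcompl.symm
    rw [sub_eq_zero] at this
    exact this.symm
  have h1X : (1 : ℂ) ∈ spectrum ℂ (E X) :=
    one_mem_spectrum_of_isPositive ((nonneg_iff_isPositive _).mp (hpos X hX)) (hnorm1 X hX hne)
  have h1c : (1 : ℂ) ∈ spectrum ℂ (E Xᶜ) :=
    one_mem_spectrum_of_isPositive ((nonneg_iff_isPositive _).mp (hpos Xᶜ hXc)) (hnorm1 Xᶜ hXc hc0)
  rw [hcompl, spectrum.mem_iff] at h1c
  have hnu : ¬IsUnit (E X) := by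
    simpa [sub_sub_cancel] using h1c
  exact ⟨(spectrum.zero_mem_iff (R := ℂ)).mpr hnu, h1X⟩
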